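/- arXiv:0905.3507 — 9 statements merged into one kernel-verified Lean document; each statement's English description precedes it below -/
import Mathlib

section
/- Let X and Y be Hilbert C*-modules over a C*-algebra A, let α, β, γ be real numbers, and let T, S : X → Y be adjointable operators such that T*S is self-adjoint and αT*T + βS*S = γ·Id_X. Then for all x, y ∈ X, αβ·|Tx + Sy|² + |βSx − αTy|² = βγ·|x|² + αγ·|y|², where |z|² denotes the A-valued inner product ⟨z, z⟩. -/
/-!
Self-adjointness of `T* S` says exactly that `⟨T u, S v⟩ = ⟨S u, T v⟩`, so after expanding the
left-hand side the `αβ` cross terms cancel; the remaining diagonal terms regroup as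
`β (α |Tx|² + β |Sx|²) + α (α |Ty|² + β |Sy|²)`, and `α T*T + β S*S = γ` turns each bracket into
`γ |·|²`.
-/

section

open ContinuousLinearMap

variable {𝕜 E F : Type*} [RCLike 𝕜] [NormedAddCommGroup E] [InnerProductSpace 𝕜 E]
  [CompleteSpace E] [NormedAddCommGroup F] [InnerProductSpace 𝕜 F] [CompleteSpace F]

local notation "⟪" x ", " y "⟫" => inner 𝕜 x y

theorem inner_apply_apply_comm_of_isSelfAdjoint_adjoint_comp {T S : E →L[𝕜] F}
    (hTS : IsSelfAdjoint (adjoint T ∘L S)) (u v : E) : ⟪T u, S v⟫ = ⟪S u, T v⟫ := by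
  calc ⟪T u, S v⟫ = ⟪u, (adjoint T ∘L S) v⟫ := by rw [comp_apply, adjoint_inner_right]
    _ = ⟪(adjoint T ∘L S) u, v⟫ := (hTS.isSymmetric u v).symm
    _ = ⟪S u, T v⟫ := by rw [comp_apply, adjoint_inner_left]

theorem inner_self_combination_of_adjoint_comp_combination {α β γ : 𝕜} {T S : E →L[𝕜] F}
    (h : α • (adjoint T ∘L T) + β • (adjoint S ∘L S) = γ • (1 : E →L[𝕜] E)) (z : E) :
    α * ⟪T z, T z⟫ + β * ⟪S z, S z⟫ = γ * ⟪z, z⟫ := by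
  have hz := congrArg (fun A : E →L[𝕜] E => ⟪z, A z⟫) h
  simpa only [add_apply, smul_apply, comp_apply, one_apply_eq_self, inner_add_right,
    inner_smul_right, adjoint_inner_right] using hz

end

/-- The module identity, formalized (as permitted by the context) in the special case
where the Hilbert C*-module is a complex Hilbert space `H` (a Hilbert `ℂ`-module), so that
`|z|² = ⟨z, z⟩` is the complex inner product. -/
theorem module_operator_identity {H : Type*} [NormedAddCommGroup H]
    [InnerProductSpace ℂ H] [CompleteSpace H]
    (α β γ : ℝ) (T S : H →L[ℂ] H)
    (hsa : IsSelfAdjoint (ContinuousLinearMap.adjoint T * S))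
    (heq : α • (ContinuousLinearMap.adjoint T * T) + β • (ContinuousLinearMap.adjoint S * S)
      = γ • (1 : H →L[ℂ] H)) :
    ∀ x y : H,
      (α * β : ℂ) * inner ℂ (T x + S y) (T x + S y)
        + inner ℂ (β • S x - α • T y) (β • S x - α • T y)
      = (β * γ : ℂ) * inner ℂ x x + (α * γ : ℂ) * inner ℂ y y := by
  intro x y
  have hxy := inner_apply_apply_comm_of_isSelfAdjoint_adjoint_comp (T := T) (S := S) hsa x y
  have hyx := inner_apply_apply_comm_of_isSelfAdjoint_adjoint_comp (T := T) (S := S) hsa y x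
  simp only [← Complex.coe_smul] at heq
  have hx := inner_self_combination_of_adjoint_comp_combination heq x
  have hy := inner_self_combination_of_adjoint_comp_combination heq y
  simp only [inner_add_add_self, inner_sub_sub_self, ← Complex.coe_smul, inner_smul_left,
    inner_smul_right, Complex.conj_ofReal]
  linear_combination (β : ℂ) * hx + (α : ℂ) * hy + (α * β : ℂ) * (hxy - hyx)
end

section
/- Let H be a complex Hilbert space, α, β, γ real numbers, and T, S bounded linear operators on H such that T*S is self-adjoint and αT*T + βS*S = γ·I. Then for all x, y ∈ H, αβ·‖Tx + Sy‖² + ‖βSx − αTy‖² = βγ·‖x‖² + αγ·‖y‖². -/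
/-!
Expand both squares. Self-adjointness of `T† S` makes `⟪S x, T y⟫ = ⟪T x, S y⟫`, so the cross
terms cancel; pairing `α T† T + β S† S = γ` with `z` gives `α ‖T z‖² + β ‖S z‖² = γ ‖z‖²`, which
collects the remaining terms at `z = x` and `z = y`.
-/

open ContinuousLinearMap RCLike
open scoped InnerProductSpace

theorem norm_smul_sub_smul_sq (𝕜 : Type*) {E : Type*} [RCLike 𝕜] [NormedAddCommGroup E]
    [InnerProductSpace 𝕜 E] [Module ℝ E] [IsScalarTower ℝ 𝕜 E] (a b : ℝ) (u v : E) :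
    ‖a • u - b • v‖ ^ 2 = a ^ 2 * ‖u‖ ^ 2 - 2 * (a * b) * re ⟪u, v⟫_𝕜 + b ^ 2 * ‖v‖ ^ 2 := by
  rw [real_smul_eq_coe_smul (K := 𝕜) a u, real_smul_eq_coe_smul (K := 𝕜) b v,
    norm_sub_sq (𝕜 := 𝕜), inner_smul_real_left, inner_smul_real_right, norm_smul, norm_smul,
    norm_ofReal, norm_ofReal, mul_pow, mul_pow, sq_abs, sq_abs]
  simp only [real_smul_eq_coe_mul, re_ofReal_mul]
  ring

section

variable {𝕜 E : Type*} [RCLike 𝕜] [NormedAddCommGroup E] [InnerProductSpace 𝕜 E]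
  [CompleteSpace E] {T S : E →L[𝕜] E}

theorem mul_norm_sq_add_mul_norm_sq_of_adjoint_combination [NormedSpace ℝ E]
    [IsScalarTower ℝ 𝕜 E] {α β γ : ℝ}
    (h : α • (adjoint T * T) + β • (adjoint S * S) = γ • (1 : E →L[𝕜] E)) (z : E) :
    α * ‖T z‖ ^ 2 + β * ‖S z‖ ^ 2 = γ * ‖z‖ ^ 2 := by
  have hz := congrArg (fun A : E →L[𝕜] E => re ⟪A z, z⟫_𝕜) h
  simpa only [add_apply, smul_apply, real_smul_eq_coe_smul (K := 𝕜), inner_smul_left,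
    conj_ofReal, inner_add_left, map_add, re_ofReal_mul, one_apply_eq_self, mul_apply_eq_comp,
    adjoint_inner_left, inner_self_eq_norm_sq] using hz

theorem inner_apply_swap_of_isSelfAdjoint_adjoint_mul (h : IsSelfAdjoint (adjoint T * S))
    (x y : E) : ⟪S x, T y⟫_𝕜 = ⟪T x, S y⟫_𝕜 := by
  simpa only [coe_coe, mul_apply_eq_comp, adjoint_inner_left, adjoint_inner_right] using
    h.isSymmetric x y

end

theorem hilbert_operator_identity {H : Type*} [NormedAddCommGroup H]
    [InnerProductSpace ℂ H] [CompleteSpace H]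
    (α β γ : ℝ) (T S : H →L[ℂ] H)
    (hsa : IsSelfAdjoint (ContinuousLinearMap.adjoint T * S))
    (heq : α • (ContinuousLinearMap.adjoint T * T) + β • (ContinuousLinearMap.adjoint S * S)
      = γ • (1 : H →L[ℂ] H)) :
    ∀ x y : H, α * β * ‖T x + S y‖ ^ 2 + ‖β • S x - α • T y‖ ^ 2
      = β * γ * ‖x‖ ^ 2 + α * γ * ‖y‖ ^ 2 := by
  intro x y
  have hsum := norm_add_sq (𝕜 := ℂ) (T x) (S y)
  have hdiff := norm_smul_sub_smul_sq ℂ β α (S x) (T y)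
  have hx := mul_norm_sq_add_mul_norm_sq_of_adjoint_combination heq x
  have hy := mul_norm_sq_add_mul_norm_sq_of_adjoint_combination heq y
  have hcross := congrArg re (inner_apply_swap_of_isSelfAdjoint_adjoint_mul hsa x y)
  linear_combination α * β * hsum + hdiff + β * hx + α * hy - 2 * α * β * hcross
end

section
/- Let A be a unital C*-algebra, α, β, γ real numbers, and a, b elements of the center of A with a*b self-adjoint and α·a*a + β·b*b = γ·1. Then for all x, y ∈ A, αβ·(xa + yb)*(xa + yb) + (βxb − αya)*(βxb − αya) = βγ·x*x + αγ·y*y. -/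
/-!
Centrality of `a` and `b` turns every product `(x c)* (y d)` with `c, d ∈ {a, b}` into
`(c* d) (x* y)`. The cross terms then cancel because `b* a = a* b`, and the diagonal terms
combine through `α a* a + β b* b = γ`.
-/

theorem star_mul_mul_of_mem_center {A : Type*} [Semiring A] [StarMul A] {a b : A}
    (hb : b ∈ Set.center A) (x y : A) :
    star (x * a) * (y * b) = star a * b * (star x * y) := by
  rw [star_mul, mul_assoc, ← mul_assoc (star x), ← (hb.comm _).eq, ← mul_assoc, ← mul_assoc]

theorem euler_lagrange_identity {R A : Type*} [CommRing R] [StarRing R] [TrivialStar R]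
    [Ring A] [StarRing A] [Algebra R A] [StarModule R A] {α β γ : R} {a b : A}
    (ha : a ∈ Set.center A) (hb : b ∈ Set.center A) (hab : star b * a = star a * b)
    (heq : α • (star a * a) + β • (star b * b) = γ • (1 : A)) (x y : A) :
    (α * β) • (star (x * a + y * b) * (x * a + y * b))
        + star (β • (x * b) - α • (y * a)) * (β • (x * b) - α • (y * a))
      = (β * γ) • (star x * x) + (α * γ) • (star y * y) := by
  have hmul (z : A) : α • (star a * a * z) + β • (star b * b * z) = γ • z := by
    simpa only [add_mul, smul_mul_assoc, one_mul] using congrArg (· * z) heq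
  simp only [star_add, star_sub, star_smul, star_trivial, add_mul, mul_add, sub_mul, mul_sub,
    smul_mul_assoc, mul_smul_comm, star_mul_mul_of_mem_center ha, star_mul_mul_of_mem_center hb,
    hab]
  linear_combination (norm := module) β • hmul (star x * x) + α • hmul (star y * y)

theorem euler_lagrange_cstar_general {A : Type*} [NormedRing A] [StarRing A]
    [NormedAlgebra ℂ A] [StarModule ℂ A]
    (α β γ : ℝ) (a b : A) (ha : a ∈ Set.center A) (hb : b ∈ Set.center A)
    (hsa : IsSelfAdjoint (star a * b))
    (heq : α • (star a * a) + β • (star b * b) = γ • (1 : A)) :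
    ∀ x y : A,
      (α * β) • (star (x * a + y * b) * (x * a + y * b))
        + star (β • (x * b) - α • (y * a)) * (β • (x * b) - α • (y * a))
      = (β * γ) • (star x * x) + (α * γ) • (star y * y) :=
  euler_lagrange_identity ha hb (by simpa using hsa.star_eq) heq

theorem euler_lagrange_cstar {A : Type*} [NormedRing A] [StarRing A] [CStarRing A]
    [NormedAlgebra ℂ A] [CompleteSpace A] [StarModule ℂ A]
    (α β γ : ℝ) (a b : A) (ha : a ∈ Set.center A) (hb : b ∈ Set.center A)
    (hsa : IsSelfAdjoint (star a * b))
    (heq : α • (star a * a) + β • (star b * b) = γ • (1 : A)) :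
    ∀ x y : A,
      (α * β) • (star (x * a + y * b) * (x * a + y * b))
        + star (β • (x * b) - α • (y * a)) * (β • (x * b) - α • (y * a))
      = (β * γ) • (star x * x) + (α * γ) • (star y * y) :=
  euler_lagrange_cstar_general α β γ a b ha hb hsa heq
end

section
/- Let H be a complex Hilbert space, α, β, γ real numbers, and a, b complex numbers that are real (i.e., self-adjoint as scalars) with α·a² + β·b² = γ. Then for all x, y ∈ H, αβ·‖a•x + b•y‖² + ‖β·b•x − α·a•y‖² = βγ·‖x‖² + αγ·‖y‖². -/
theorem euler_lagrange_hilbert {H : Type*} [NormedAddCommGroup H]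
    [InnerProductSpace ℂ H]
    (α β γ a b : ℝ) (h : α * a ^ 2 + β * b ^ 2 = γ) :
    ∀ x y : H,
      α * β * ‖a • x + b • y‖ ^ 2 + ‖(β * b) • x - (α * a) • y‖ ^ 2
        = β * γ * ‖x‖ ^ 2 + α * γ * ‖y‖ ^ 2 := by
  letI : InnerProductSpace ℝ H := InnerProductSpace.rclikeToReal ℂ H
  intro x y
  have h1 := norm_add_sq_real (a • x) (b • y)
  have h2 := norm_sub_sq_real ((β * b) • x) ((α * a) • y)
  simp only [real_inner_smul_left, real_inner_smul_right, norm_smul,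
    Real.norm_eq_abs, mul_pow, sq_abs] at h1 h2
  rw [h1, h2, ← h]; ring
end

section
/- Let p, q > 1 with 1/p + 1/q = 1 and p ≤ 2. Then for all x, y in a complex Hilbert space H, ‖x − y‖² + ‖(1−p)•x − y‖² ≤ p·‖x‖² + q·‖y‖². -/
/-! The defect in the inequality is an exact square: when `(p - 1) * q = p`,
`p‖x‖² + q‖y‖² - ‖x - y‖² - ‖(1 - p)x - y‖² = (q - 2)‖(p - 1)x + y‖²`,
and `q ≥ 2` exactly when `p ≤ 2`. -/

lemma Real.HolderConjugate.two_le_of_le_two {p q : ℝ} (h : p.HolderConjugate q) (hp2 : p ≤ 2) :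
    2 ≤ q := by
  nlinarith [h.sub_one_mul_conj, h.lt, h.symm.lt]

lemma norm_sub_sq_add_norm_smul_sub_sq_add {E : Type*} [NormedAddCommGroup E]
    [InnerProductSpace ℝ E] {p q : ℝ} (hpq : (p - 1) * q = p) (x y : E) :
    ‖x - y‖ ^ 2 + ‖(1 - p) • x - y‖ ^ 2 + (q - 2) * ‖(p - 1) • x + y‖ ^ 2 =
      p * ‖x‖ ^ 2 + q * ‖y‖ ^ 2 := by
  rw [norm_sub_sq_real, norm_sub_sq_real, norm_add_sq_real, norm_smul, norm_smul,
    real_inner_smul_left, real_inner_smul_left, mul_pow, mul_pow, Real.norm_eq_abs,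
    Real.norm_eq_abs, sq_abs, sq_abs]
  linear_combination ((p - 1) * ‖x‖ ^ 2 + 2 * inner ℝ x y) * hpq

theorem bohr_inequality_hirzallah_general {H : Type*} [NormedAddCommGroup H] [InnerProductSpace ℂ H]
    (p q : ℝ) (hp : 1 < p) (hpq : 1 / p + 1 / q = 1) (hp2 : p ≤ 2) :
    ∀ x y : H,
      ‖x - y‖ ^ 2 + ‖(1 - p) • x - y‖ ^ 2 ≤ p * ‖x‖ ^ 2 + q * ‖y‖ ^ 2 := by
  let _ : InnerProductSpace ℝ H := .complexToReal
  intro x y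
  have hconj : p.HolderConjugate q :=
    Real.holderConjugate_iff.mpr ⟨hp, by simpa only [one_div] using hpq⟩
  rw [← norm_sub_sq_add_norm_smul_sub_sq_add hconj.sub_one_mul_conj x y, le_add_iff_nonneg_right]
  exact mul_nonneg (sub_nonneg.mpr (hconj.two_le_of_le_two hp2)) (sq_nonneg _)

theorem bohr_inequality_hirzallah {H : Type*} [NormedAddCommGroup H] [InnerProductSpace ℂ H]
    (p q : ℝ) (hp : 1 < p) (hq : 1 < q) (hpq : 1 / p + 1 / q = 1) (hp2 : p ≤ 2) :
    ∀ x y : H,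
      ‖x - y‖ ^ 2 + ‖(1 - p) • x - y‖ ^ 2 ≤ p * ‖x‖ ^ 2 + q * ‖y‖ ^ 2 :=
  bohr_inequality_hirzallah_general p q hp hpq hp2
end

section
/- Let p, q > 1 with 1/p + 1/q = 1, and let H be a complex Hilbert space. If p ≥ 2, then ‖x − y‖² + ‖(1−p)•x − y‖² ≥ p·‖x‖² + q·‖y‖² for all x, y ∈ H. -/
theorem bohr_inequality_reverse {H : Type*} [NormedAddCommGroup H] [InnerProductSpace ℂ H]
    (p q : ℝ) (hp : 1 < p) (hq : 1 < q) (hpq : 1 / p + 1 / q = 1) (hp2 : 2 ≤ p) :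
    ∀ x y : H,
      p * ‖x‖ ^ 2 + q * ‖y‖ ^ 2 ≤ ‖x - y‖ ^ 2 + ‖(1 - p) • x - y‖ ^ 2 := by
  intro x y
  have hq' : q * (p - 1) = p := by
    field_simp at hpq
    nlinarith [hpq]
  set t : ℝ := RCLike.re (inner ℂ x y : ℂ) with ht
  have h1 : ‖x - y‖ ^ 2 = ‖x‖ ^ 2 - 2 * t + ‖y‖ ^ 2 := norm_sub_sq (𝕜 := ℂ) x y
  have h2 : ‖(1 - p) • x - y‖ ^ 2
      = (1 - p) ^ 2 * ‖x‖ ^ 2 - 2 * ((1 - p) * t) + ‖y‖ ^ 2 := by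
    have := norm_sub_sq (𝕜 := ℂ) ((1 - p) • x) y
    rw [this, norm_smul, RCLike.real_smul_eq_coe_smul (K := ℂ), inner_smul_left]
    simp [mul_pow, sq_abs]
    left; exact ht.symm
  have hab : -(‖x‖ * ‖y‖) ≤ t := by
    have h := re_inner_le_norm (𝕜 := ℂ) (-x) y
    rw [inner_neg_left, map_neg, norm_neg] at h
    linarith
  have hx : (0:ℝ) ≤ ‖x‖ := norm_nonneg x
  have hy : (0:ℝ) ≤ ‖y‖ := norm_nonneg y
  rw [h1, h2]
  nlinarith [sq_nonneg ((p - 1) * ‖x‖ - ‖y‖), mul_nonneg (mul_nonneg (sub_nonneg.2 hp2) (by linarith : (0:ℝ) ≤ p - 1)) (by linarith : (0:ℝ) ≤ t + ‖x‖ * ‖y‖), sq_nonneg (‖x‖ - ‖y‖), mul_nonneg (sub_nonneg.2 hp2) (sq_nonneg ((p-1)*‖x‖ - ‖y‖))]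
end

section
/- Let p, q > 1 with 1/p + 1/q = 1, and let x, y be elements of a complex Hilbert space H. If ‖x − y‖² + ‖(1−p)•x − y‖² = p·‖x‖² + q·‖y‖², then p = 2 (and hence q = 2) or y = (1−p)•x. Conversely, if p = 2 or y = (1−p)•x, then equality holds. -/
/-! When `(p - 1) q = p`, expanding the three squared norms shows
`(p - 1) (‖x - y‖² + ‖(1 - p) x - y‖² - p ‖x‖² - q ‖y‖²) = (p - 2) ‖y - (1 - p) x‖²`,
so for `p > 1` equality holds exactly when one of the two factors on the right vanishes. -/

theorem sub_one_mul_bohr_gap {E : Type*} [NormedAddCommGroup E] [InnerProductSpace ℝ E]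
    {p q : ℝ} (hpq : (p - 1) * q = p) (x y : E) :
    (p - 1) * (‖x - y‖ ^ 2 + ‖(1 - p) • x - y‖ ^ 2 - (p * ‖x‖ ^ 2 + q * ‖y‖ ^ 2))
      = (p - 2) * ‖y - (1 - p) • x‖ ^ 2 := by
  rw [norm_sub_sq_real, norm_sub_sq_real, norm_sub_sq_real, real_inner_smul_left,
    real_inner_smul_right, real_inner_comm, norm_smul, mul_pow, Real.norm_eq_abs, sq_abs]
  linear_combination (-‖y‖ ^ 2) * hpq

theorem bohr_equality_characterization_general {H : Type*} [NormedAddCommGroup H]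
    [InnerProductSpace ℂ H]
    (p q : ℝ) (hp : 1 < p) (hpq : 1 / p + 1 / q = 1) (x y : H) :
    ‖x - y‖ ^ 2 + ‖(1 - p) • x - y‖ ^ 2 = p * ‖x‖ ^ 2 + q * ‖y‖ ^ 2
      ↔ p = 2 ∨ y = (1 - p) • x := by
  let _ : InnerProductSpace ℝ H := InnerProductSpace.complexToReal
  have hconj : p.HolderConjugate q :=
    Real.holderConjugate_iff.mpr ⟨hp, by simpa only [one_div] using hpq⟩
  calc _ ↔ (p - 1) * (‖x - y‖ ^ 2 + ‖(1 - p) • x - y‖ ^ 2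
          - (p * ‖x‖ ^ 2 + q * ‖y‖ ^ 2)) = 0 := by
        rw [mul_eq_zero_iff_left hconj.sub_one_ne_zero, sub_eq_zero]
    _ ↔ (p - 2) * ‖y - (1 - p) • x‖ ^ 2 = 0 := by
        rw [sub_one_mul_bohr_gap hconj.sub_one_mul_conj]
    _ ↔ p = 2 ∨ y = (1 - p) • x := by
        simp only [mul_eq_zero, sub_eq_zero, pow_eq_zero_iff two_ne_zero, norm_eq_zero]

theorem bohr_equality_characterization {H : Type*} [NormedAddCommGroup H]
    [InnerProductSpace ℂ H]
    (p q : ℝ) (hp : 1 < p) (hq : 1 < q) (hpq : 1 / p + 1 / q = 1) (x y : H) :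
    ‖x - y‖ ^ 2 + ‖(1 - p) • x - y‖ ^ 2 = p * ‖x‖ ^ 2 + q * ‖y‖ ^ 2
      ↔ p = 2 ∨ y = (1 - p) • x :=
  bohr_equality_characterization_general p q hp hpq x y
end

section
/- Let p, q > 1 with 1/p + 1/q = 1 and p ≥ 2 (equivalently 1 < q ≤ 2). Then for all x, y in a complex Hilbert space H, ‖x − y‖² + ‖(1−q)•y − x‖² ≤ p·‖x‖² + q·‖y‖². -/
/-!
Put `t = q - 1 ∈ (0, 1]`, so that `p = (1 + t) / t` and `(1 - q) • y - x = -(x + t • y)`.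
Expanding the squares gives the identity `t ‖x - y‖² + ‖x + t y‖² = (1 + t) (‖x‖² + t ‖y‖²)`,
so `p ‖x‖² + q ‖y‖² = ‖x - y‖² + ‖x + t y‖² / t`, which dominates `‖x - y‖² + ‖x + t y‖²`
because `t ≤ 1`.
-/

section RealInnerProductSpace

variable {E : Type*} [NormedAddCommGroup E] [InnerProductSpace ℝ E]

theorem mul_norm_sub_sq_add_norm_add_smul_sq (t : ℝ) (x y : E) :
    t * ‖x - y‖ ^ 2 + ‖x + t • y‖ ^ 2 = (1 + t) * (‖x‖ ^ 2 + t * ‖y‖ ^ 2) := by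
  rw [norm_sub_sq_real, norm_add_sq_real, norm_smul, real_inner_smul_right, mul_pow,
    Real.norm_eq_abs, sq_abs]
  ring

theorem norm_sub_sq_add_norm_add_smul_sq_le {t : ℝ} (ht₀ : 0 < t) (ht₁ : t ≤ 1) (x y : E) :
    ‖x - y‖ ^ 2 + ‖x + t • y‖ ^ 2 ≤ (1 + t) / t * ‖x‖ ^ 2 + (1 + t) * ‖y‖ ^ 2 := by
  have hdiv : ‖x + t • y‖ ^ 2 ≤ ‖x + t • y‖ ^ 2 / t :=
    le_div_self (sq_nonneg _) ht₀ ht₁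
  calc ‖x - y‖ ^ 2 + ‖x + t • y‖ ^ 2
      ≤ ‖x - y‖ ^ 2 + ‖x + t • y‖ ^ 2 / t := by gcongr
    _ = (t * ‖x - y‖ ^ 2 + ‖x + t • y‖ ^ 2) / t := by field_simp
    _ = (1 + t) / t * ‖x‖ ^ 2 + (1 + t) * ‖y‖ ^ 2 := by
      rw [mul_norm_sub_sq_add_norm_add_smul_sq]
      field_simp

end RealInnerProductSpace

theorem bohr_inequality_variant_general {H : Type*} [NormedAddCommGroup H] [InnerProductSpace ℂ H]
    (p q : ℝ) (hp : 1 < p) (hpq : 1 / p + 1 / q = 1) (hp2 : 2 ≤ p) :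
    ∀ x y : H,
      ‖x - y‖ ^ 2 + ‖(1 - q) • y - x‖ ^ 2 ≤ p * ‖x‖ ^ 2 + q * ‖y‖ ^ 2 := by
  intro x y
  let : InnerProductSpace ℝ H := InnerProductSpace.complexToReal
  have hconj : p.HolderConjugate q :=
    Real.holderConjugate_iff.mpr ⟨hp, by simpa only [one_div] using hpq⟩
  have hq : 0 < q - 1 := sub_pos.mpr hconj.symm.lt
  have hpq' : (q - 1) * p = q := hconj.symm.sub_one_mul_conj
  have hq2 : q - 1 ≤ 1 := by
    have := mul_le_mul_of_nonneg_left hp2 hq.le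
    linarith
  have hp_eq : (1 + (q - 1)) / (q - 1) = p := by
    rw [div_eq_iff hq.ne']
    linarith
  have hneg : (1 - q) • y - x = -(x + (q - 1) • y) := by
    rw [neg_add, ← neg_smul, neg_sub]
    abel
  have key := norm_sub_sq_add_norm_add_smul_sq_le hq hq2 x y
  rw [hp_eq, add_sub_cancel] at key
  rwa [hneg, norm_neg]

theorem bohr_inequality_variant {H : Type*} [NormedAddCommGroup H] [InnerProductSpace ℂ H]
    (p q : ℝ) (hp : 1 < p) (hq : 1 < q) (hpq : 1 / p + 1 / q = 1) (hp2 : 2 ≤ p) :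
    ∀ x y : H,
      ‖x - y‖ ^ 2 + ‖(1 - q) • y - x‖ ^ 2 ≤ p * ‖x‖ ^ 2 + q * ‖y‖ ^ 2 :=
  bohr_inequality_variant_general p q hp hpq hp2
end

section
/- Let H be a complex Hilbert space, α, β positive real numbers with α + β = 1, and T, S bounded linear operators on H such that T*S is self-adjoint and α·T*T + β·S*S = I. Then for all x, y ∈ H, ‖β·Sx + α·Ty‖² ≤ β·‖x‖² + α·‖y‖². -/
/-!
Expanding the square, the cross term is `2αβ re ⟪S x, T y⟫`. Self-adjointness of `T† S`
gives `S† T = T† S`, which moves `S` and `T` across the inner product: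
`⟪S x, T y⟫ = ⟪T x, S y⟫`. By Cauchy–Schwarz and AM–GM this is at most
`(‖T x‖² + ‖S y‖²) / 2`, and after regrouping, the identity `α‖T z‖² + β‖S z‖² = ‖z‖²`
(read off from `α T†T + β S†S = 1`) at `z = x` and `z = y` gives the bound.
-/

open ContinuousLinearMap RCLike

section

variable {𝕜 E : Type*} [RCLike 𝕜] [NormedAddCommGroup E] [InnerProductSpace 𝕜 E]

local notation "⟪" x ", " y "⟫" => inner 𝕜 x y

theorem norm_real_smul_add_real_smul_sq [Module ℝ E] [IsScalarTower ℝ 𝕜 E] (a b : ℝ)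
    (u v : E) :
    ‖a • u + b • v‖ ^ 2 = a ^ 2 * ‖u‖ ^ 2 + 2 * (a * b) * re ⟪u, v⟫ + b ^ 2 * ‖v‖ ^ 2 := by
  rw [real_smul_eq_coe_smul (K := 𝕜) a, real_smul_eq_coe_smul (K := 𝕜) b, norm_add_sq (𝕜 := 𝕜),
    norm_smul, norm_smul, inner_smul_real_left, inner_smul_real_right]
  simp only [norm_ofReal, mul_pow, sq_abs, smul_re]
  ring

variable [CompleteSpace E]

theorem inner_apply_apply_comm_of_isSelfAdjoint {T S : E →L[𝕜] E}
    (h : IsSelfAdjoint (adjoint T * S)) (x y : E) : ⟪S x, T y⟫ = ⟪T x, S y⟫ := by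
  have hST : adjoint S * T = adjoint T * S := by
    simpa only [star_mul, star_eq_adjoint, adjoint_adjoint] using h.star_eq
  calc ⟪S x, T y⟫ = ⟪(adjoint T * S) x, y⟫ := (adjoint_inner_left T y (S x)).symm
    _ = ⟪(adjoint S * T) x, y⟫ := by rw [hST]
    _ = ⟪T x, S y⟫ := adjoint_inner_left S y (T x)

theorem two_mul_re_inner_le_of_isSelfAdjoint {T S : E →L[𝕜] E}
    (h : IsSelfAdjoint (adjoint T * S)) (x y : E) :
    2 * re ⟪S x, T y⟫ ≤ ‖T x‖ ^ 2 + ‖S y‖ ^ 2 := by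
  rw [inner_apply_apply_comm_of_isSelfAdjoint h]
  nlinarith [re_inner_le_norm (𝕜 := 𝕜) (T x) (S y), sq_nonneg (‖T x‖ - ‖S y‖)]

end

theorem smul_norm_sq_add_smul_norm_sq_eq_norm_sq {H : Type*}
    [NormedAddCommGroup H] [InnerProductSpace ℂ H] [CompleteSpace H] {a b : ℝ}
    {T S : H →L[ℂ] H} (h : a • (adjoint T * T) + b • (adjoint S * S) = 1) (z : H) :
    a * ‖T z‖ ^ 2 + b * ‖S z‖ ^ 2 = ‖z‖ ^ 2 := by
  have hz := congrArg (fun A : H →L[ℂ] H => re (inner ℂ (A z) z)) h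
  simp only [add_apply, smul_apply, one_apply_eq_self] at hz
  rw [real_smul_eq_coe_smul (K := ℂ) a, real_smul_eq_coe_smul (K := ℂ) b, inner_add_left,
    inner_smul_real_left, inner_smul_real_left, map_add, smul_re, smul_re] at hz
  rwa [apply_norm_sq_eq_inner_adjoint_left, apply_norm_sq_eq_inner_adjoint_left,
    norm_sq_eq_re_inner (𝕜 := ℂ)]

theorem bohr_operator_inequality_general {H : Type*} [NormedAddCommGroup H]
    [InnerProductSpace ℂ H] [CompleteSpace H]
    (α β : ℝ) (hα : 0 < α) (hβ : 0 < β)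
    (T S : H →L[ℂ] H)
    (hsa : IsSelfAdjoint (ContinuousLinearMap.adjoint T * S))
    (heq : α • (ContinuousLinearMap.adjoint T * T) + β • (ContinuousLinearMap.adjoint S * S)
      = (1 : H →L[ℂ] H)) :
    ∀ x y : H, ‖β • S x + α • T y‖ ^ 2 ≤ β * ‖x‖ ^ 2 + α * ‖y‖ ^ 2 := by
  intro x y
  have hcross := two_mul_re_inner_le_of_isSelfAdjoint hsa x y
  have hβα : 0 ≤ β * α := (mul_pos hβ hα).le
  calc ‖β • S x + α • T y‖ ^ 2
      = β ^ 2 * ‖S x‖ ^ 2 + β * α * (2 * re (inner ℂ (S x) (T y))) + α ^ 2 * ‖T y‖ ^ 2 := by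
        rw [norm_real_smul_add_real_smul_sq (𝕜 := ℂ)]
        ring
    _ ≤ β ^ 2 * ‖S x‖ ^ 2 + β * α * (‖T x‖ ^ 2 + ‖S y‖ ^ 2) + α ^ 2 * ‖T y‖ ^ 2 := by gcongr
    _ = β * (α * ‖T x‖ ^ 2 + β * ‖S x‖ ^ 2) + α * (α * ‖T y‖ ^ 2 + β * ‖S y‖ ^ 2) := by ring
    _ = β * ‖x‖ ^ 2 + α * ‖y‖ ^ 2 := by
        rw [smul_norm_sq_add_smul_norm_sq_eq_norm_sq heq,
          smul_norm_sq_add_smul_norm_sq_eq_norm_sq heq]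

theorem bohr_operator_inequality {H : Type*} [NormedAddCommGroup H]
    [InnerProductSpace ℂ H] [CompleteSpace H]
    (α β : ℝ) (hα : 0 < α) (hβ : 0 < β) (hαβ : α + β = 1)
    (T S : H →L[ℂ] H)
    (hsa : IsSelfAdjoint (ContinuousLinearMap.adjoint T * S))
    (heq : α • (ContinuousLinearMap.adjoint T * T) + β • (ContinuousLinearMap.adjoint S * S)
      = (1 : H →L[ℂ] H)) :
    ∀ x y : H, ‖β • S x + α • T y‖ ^ 2 ≤ β * ‖x‖ ^ 2 + α * ‖y‖ ^ 2 :=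
  bohr_operator_inequality_general α β hα hβ T S hsa heq
end
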